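/- For each fixed H₂ ∈ [0, log 2], the function H₁ ↦ h₂(h₂⁻¹(H₁) ∗ h₂⁻¹(H₂)) is convex on [0, log 2]. -/

import Mathlib

/-!
Write `L = h₂'` (`h2Deriv`), so `L t = log ((1 - t) / t)`, and `q = a ∗ p = a + (1 - 2a) p`.
By the inverse function rule the derivative of `H ↦ h₂(a ∗ h₂⁻¹(H))` is `(1 - 2a) L(q) / L(p)` with `p = h₂⁻¹(H)`;
since `h₂⁻¹` is increasing, convexity reduces to `p ↦ L(a ∗ p) / L(p)` being nondecreasing on
`(0, 1/2)` (Mrs. Gerber's Lemma). As `L' t = -1 / (t (1 - t))` and `1 - 2q = (1 - 2a)(1 - 2p)`,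
the derivative of that ratio has the sign of `ψ(q) - ψ(p)` for `ψ t = t (1 - t) L(t) / (1 - 2t)`,
and `ψ` is nondecreasing because `L(t) ≥ 2 (1 - 2t)`.
-/

noncomputable def binConv (a b : ℝ) : ℝ := a * (1 - b) + (1 - a) * b

noncomputable def h2 (p : ℝ) : ℝ := -p * Real.log p - (1 - p) * Real.log (1 - p)

open Real Set

theorem MonotoneOn.strictMonoOn_of_leftInvOn {α β : Type*} [LinearOrder α] [Preorder β]
    {g : α → β} {ginv : β → α} {s : Set α} {t : Set β}
    (hg : MonotoneOn g s) (hmaps : MapsTo ginv t s) (hinv : LeftInvOn g ginv t) :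
    StrictMonoOn ginv t := by
  intro x hx y hy hxy
  by_contra! h
  have := hg (hmaps hy) (hmaps hx) h
  rw [hinv hx, hinv hy] at this
  exact this.not_gt hxy

theorem MonotoneOn.continuousOn_of_surjOn {α β : Type*} [LinearOrder α] [TopologicalSpace α]
    [OrderTopology α] [LinearOrder β] [TopologicalSpace β] [OrderTopology β] [DenselyOrdered β]
    {f : α → β} {s : Set α} {t : Set β} [s.OrdConnected] [t.OrdConnected]
    (hf : MonotoneOn f s) (hmaps : MapsTo f s t) (hsurj : SurjOn f s t) : ContinuousOn f s := by
  rw [continuousOn_iff_continuous_domRestrict]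
  have hrestrict : Continuous (hmaps.restrict f s t) :=
    Monotone.continuous_of_surjective (fun x y hxy => hf x.2 y.2 hxy)
      (hmaps.restrict_surjective_iff.2 hsurj)
  exact continuous_subtype_val.comp hrestrict

theorem h2_eq_binEntropy : h2 = binEntropy := by
  funext p
  simp only [h2, binEntropy, log_inv]
  ring

theorem continuous_h2 : Continuous h2 := h2_eq_binEntropy ▸ binEntropy_continuous

theorem h2_strictMonoOn : StrictMonoOn h2 (Icc 0 (1/2)) := by
  rw [h2_eq_binEntropy, one_div]
  exact binEntropy_strictMonoOn

theorem mapsTo_h2 : MapsTo h2 (Icc 0 (1/2)) (Icc 0 (log 2)) := by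
  rintro p ⟨hp0, hp⟩
  rw [h2_eq_binEntropy]
  exact ⟨binEntropy_nonneg hp0 (by linarith), binEntropy_le_log_two⟩

theorem h2_zero : h2 0 = 0 := by simp [h2]

theorem h2_half : h2 (1/2) = log 2 := by
  rw [h2_eq_binEntropy, one_div, binEntropy_two_inv]

noncomputable def h2Deriv (t : ℝ) : ℝ := log (1 - t) - log t

theorem hasDerivAt_h2 {p : ℝ} (h0 : p ≠ 0) (h1 : p ≠ 1) : HasDerivAt h2 (h2Deriv p) p := by
  rw [h2_eq_binEntropy]
  exact hasDerivAt_binEntropy h0 h1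

theorem hasDerivAt_h2Deriv {t : ℝ} (h0 : t ≠ 0) (h1 : t ≠ 1) :
    HasDerivAt h2Deriv (-(t * (1 - t))⁻¹) t := by
  have h1' : 1 - t ≠ 0 := sub_ne_zero.2 h1.symm
  refine (((hasDerivAt_log h1').comp t ((hasDerivAt_id t).const_sub 1)).sub
    (hasDerivAt_log h0)).congr_deriv ?_
  field_simp
  ring

theorem h2Deriv_pos {t : ℝ} (h0 : 0 < t) (h1 : t < 1/2) : 0 < h2Deriv t :=
  sub_pos.2 (log_lt_log h0 (by linarith))

theorem two_mul_one_sub_two_mul_le_h2Deriv {t : ℝ} (h0 : 0 < t) (h1 : t ≤ 1/2) :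
    2 * (1 - 2 * t) ≤ h2Deriv t := by
  -- `x ≤ artanh x` at `x = 1 - 2t`
  have h := sum_range_le_log_div (x := 1 - 2 * t) (by linarith) (by linarith) 1
  have hdiv : (1 + (1 - 2 * t)) / (1 - (1 - 2 * t)) = (1 - t) / t := by
    field_simp
    ring
  rw [hdiv, log_div (by linarith) h0.ne'] at h
  simp only [Finset.sum_range_one] at h
  unfold h2Deriv
  norm_num at h
  linarith

theorem monotoneOn_mul_one_sub_mul_h2Deriv_div :
    MonotoneOn (fun t => t * (1 - t) * h2Deriv t / (1 - 2 * t)) (Ioo 0 (1/2)) := by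
  have hderiv : ∀ t ∈ Ioo (0:ℝ) (1/2), HasDerivAt (fun t => t * (1 - t) * h2Deriv t / (1 - 2 * t))
      (((1 - 2 * t + 2 * t ^ 2) * h2Deriv t - (1 - 2 * t)) / (1 - 2 * t) ^ 2) t := by
    rintro t ⟨ht0, ht⟩
    refine ((((hasDerivAt_id' t).fun_mul ((hasDerivAt_id' t).const_sub 1)).fun_mul
      (hasDerivAt_h2Deriv ht0.ne' (by linarith))).fun_div
      (((hasDerivAt_id' t).const_mul 2).const_sub 1) (by linarith)).congr_deriv ?_
    have : 1 - t ≠ 0 := by linarith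
    field_simp
    ring
  refine monotoneOn_of_hasDerivWithinAt_nonneg (convex_Ioo _ _)
    (fun t ht => (hderiv t ht).continuousAt.continuousWithinAt)
    (fun t ht => (hderiv t (interior_subset ht)).hasDerivWithinAt) ?_
  rintro t ht
  rw [interior_Ioo] at ht
  obtain ⟨ht0, ht⟩ := ht
  have hL := two_mul_one_sub_two_mul_le_h2Deriv ht0 ht.le
  apply div_nonneg _ (sq_nonneg _)
  nlinarith [sq_nonneg (1 - 2 * t), mul_nonneg (sq_nonneg t) (sub_nonneg.2 hL)]

theorem one_sub_two_mul_binConv (p a : ℝ) : 1 - 2 * binConv p a = (1 - 2 * a) * (1 - 2 * p) := by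
  unfold binConv
  ring

theorem binConv_half_right (p : ℝ) : binConv p (1/2) = 1/2 := by
  unfold binConv
  ring

theorem hasDerivAt_binConv_left (p a : ℝ) : HasDerivAt (fun p => binConv p a) (1 - 2 * a) p := by
  refine ((((hasDerivAt_id' p).const_mul (1 - 2 * a)).const_add a).congr_deriv (mul_one _))
    |>.congr_of_eventuallyEq (Filter.Eventually.of_forall fun p => ?_)
  simp only [binConv]
  ring

theorem le_binConv {p a : ℝ} (hp : p ≤ 1/2) (ha : 0 ≤ a) : p ≤ binConv p a := by
  unfold binConv
  nlinarith

theorem binConv_mem_Ioo {p a : ℝ} (hp : p ∈ Ioo 0 (1/2)) (ha : a ∈ Ico 0 (1/2)) :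
    binConv p a ∈ Ioo 0 (1/2) := by
  have hq := one_sub_two_mul_binConv p a
  have := mul_pos (by linarith [ha.2] : (0:ℝ) < 1 - 2 * a) (by linarith [hp.2] : (0:ℝ) < 1 - 2 * p)
  exact ⟨hp.1.trans_le (le_binConv hp.2.le ha.1), by linarith⟩

theorem mul_h2Deriv_le_binConv {p a : ℝ} (hp : p ∈ Ioo 0 (1/2)) (ha : a ∈ Ico 0 (1/2)) :
    (1 - 2 * a) * (p * (1 - p) * h2Deriv p)
      ≤ binConv p a * (1 - binConv p a) * h2Deriv (binConv p a) := by
  set q := binConv p a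
  have hq := binConv_mem_Ioo hp ha
  have hψ := monotoneOn_mul_one_sub_mul_h2Deriv_div hp hq (le_binConv hp.2.le ha.1)
  have hp2 : 1 - 2 * p ≠ 0 := by linarith [hp.2]
  have hq2 : 0 < 1 - 2 * q := by linarith [hq.2]
  calc (1 - 2 * a) * (p * (1 - p) * h2Deriv p)
      = (1 - 2 * q) * (p * (1 - p) * h2Deriv p / (1 - 2 * p)) := by
        rw [one_sub_two_mul_binConv]
        field_simp
    _ ≤ (1 - 2 * q) * (q * (1 - q) * h2Deriv q / (1 - 2 * q)) :=
        mul_le_mul_of_nonneg_left hψ hq2.le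
    _ = q * (1 - q) * h2Deriv q := by field_simp

theorem monotoneOn_h2Deriv_binConv_div {a : ℝ} (ha : a ∈ Ico 0 (1/2)) :
    MonotoneOn (fun p => h2Deriv (binConv p a) / h2Deriv p) (Ioo 0 (1/2)) := by
  have hderiv : ∀ p ∈ Ioo (0:ℝ) (1/2), HasDerivAt (fun p => h2Deriv (binConv p a) / h2Deriv p)
      ((binConv p a * (1 - binConv p a) * h2Deriv (binConv p a)
          - (1 - 2 * a) * (p * (1 - p) * h2Deriv p))
        / (p * (1 - p) * (binConv p a * (1 - binConv p a))) / h2Deriv p ^ 2) p := by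
    intro p hp
    obtain ⟨hq0, hq⟩ := binConv_mem_Ioo hp ha
    have hp1 : 1 - p ≠ 0 := by linarith [hp.2]
    have hq1 : 1 - binConv p a ≠ 0 := by linarith
    refine (((hasDerivAt_h2Deriv hq0.ne' (by linarith)).comp p
      (hasDerivAt_binConv_left p a)).fun_div (hasDerivAt_h2Deriv hp.1.ne' (by linarith [hp.2]))
      (h2Deriv_pos hp.1 hp.2).ne').congr_deriv ?_
    have := hp.1.ne'
    have := hq0.ne'
    rw [Function.comp_apply]
    field_simp
    ring
  refine monotoneOn_of_hasDerivWithinAt_nonneg (convex_Ioo _ _)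
    (fun p hp => (hderiv p hp).continuousAt.continuousWithinAt)
    (fun p hp => (hderiv p (interior_subset hp)).hasDerivWithinAt) ?_
  intro p hp
  rw [interior_Ioo] at hp
  obtain ⟨hq0, hq⟩ := binConv_mem_Ioo hp ha
  have hkey := mul_h2Deriv_le_binConv hp ha
  have hp1 : 0 < 1 - p := by linarith [hp.2]
  have hq1 : 0 < 1 - binConv p a := by linarith
  have hp0 : 0 < p := hp.1
  exact div_nonneg (div_nonneg (sub_nonneg.2 hkey) (by positivity)) (sq_nonneg _)

section RightInverse

variable {h2inv : ℝ → ℝ}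

theorem h2inv_strictMonoOn (hmaps : MapsTo h2inv (Icc 0 (log 2)) (Icc 0 (1/2)))
    (hinv : LeftInvOn h2 h2inv (Icc 0 (log 2))) : StrictMonoOn h2inv (Icc 0 (log 2)) :=
  h2_strictMonoOn.monotoneOn.strictMonoOn_of_leftInvOn hmaps hinv

theorem h2inv_h2 (hmaps : MapsTo h2inv (Icc 0 (log 2)) (Icc 0 (1/2)))
    (hinv : LeftInvOn h2 h2inv (Icc 0 (log 2))) : LeftInvOn h2inv h2 (Icc 0 (1/2)) :=
  h2_strictMonoOn.injOn.rightInvOn_of_leftInvOn hinv mapsTo_h2 hmaps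

theorem h2inv_continuousOn (hmaps : MapsTo h2inv (Icc 0 (log 2)) (Icc 0 (1/2)))
    (hinv : LeftInvOn h2 h2inv (Icc 0 (log 2))) : ContinuousOn h2inv (Icc 0 (log 2)) :=
  (h2inv_strictMonoOn hmaps hinv).monotoneOn.continuousOn_of_surjOn hmaps
    ((h2inv_h2 hmaps hinv).surjOn mapsTo_h2)

theorem h2inv_mem_Ioo (hmaps : MapsTo h2inv (Icc 0 (log 2)) (Icc 0 (1/2)))
    (hinv : LeftInvOn h2 h2inv (Icc 0 (log 2))) {x : ℝ} (hx : x ∈ Ioo 0 (log 2)) :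
    h2inv x ∈ Ioo 0 (1/2) := by
  have hmono := h2inv_strictMonoOn hmaps hinv
  have hleft := h2inv_h2 hmaps hinv
  have hlog2 : 0 < log 2 := log_pos one_lt_two
  have hzero : h2inv 0 = 0 := by
    simpa only [h2_zero] using hleft (left_mem_Icc.2 one_half_pos.le)
  have hhalf : h2inv (log 2) = 1/2 := by
    simpa only [h2_half] using hleft (right_mem_Icc.2 one_half_pos.le)
  constructor
  · simpa only [hzero] using hmono (left_mem_Icc.2 hlog2.le) (Ioo_subset_Icc_self hx) hx.1
  · simpa only [hhalf] using hmono (Ioo_subset_Icc_self hx) (right_mem_Icc.2 hlog2.le) hx.2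

theorem hasDerivAt_h2inv (hmaps : MapsTo h2inv (Icc 0 (log 2)) (Icc 0 (1/2)))
    (hinv : LeftInvOn h2 h2inv (Icc 0 (log 2))) {x : ℝ} (hx : x ∈ Ioo 0 (log 2)) :
    HasDerivAt h2inv (h2Deriv (h2inv x))⁻¹ x := by
  obtain ⟨hp0, hp⟩ := h2inv_mem_Ioo hmaps hinv hx
  have hnhds : Icc 0 (log 2) ∈ nhds x := Icc_mem_nhds hx.1 hx.2
  exact HasDerivAt.of_local_left_inverse
    ((h2inv_continuousOn hmaps hinv).continuousAt hnhds)
    (hasDerivAt_h2 hp0.ne' (by linarith)) (h2Deriv_pos hp0 hp).ne'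
    (Filter.eventually_of_mem hnhds hinv)

end RightInverse

/-- For each fixed `H₂ ∈ [0, log 2]`, the function
`H₁ ↦ h₂(h₂⁻¹(H₁) ∗ h₂⁻¹(H₂))` is convex on `[0, log 2]`. -/
theorem h2_binConv_convex (h2inv : ℝ → ℝ)
    (hinv : ∀ x ∈ Set.Icc (0:ℝ) (Real.log 2),
      h2inv x ∈ Set.Icc (0:ℝ) (1/2) ∧ h2 (h2inv x) = x)
    (H₂ : ℝ) (hH₂ : H₂ ∈ Set.Icc (0:ℝ) (Real.log 2)) :
    ConvexOn ℝ (Set.Icc (0:ℝ) (Real.log 2))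
      (fun H₁ => h2 (binConv (h2inv H₁) (h2inv H₂))) := by
  have hmaps : MapsTo h2inv (Icc 0 (log 2)) (Icc 0 (1/2)) := fun x hx => (hinv x hx).1
  have hinvOn : LeftInvOn h2 h2inv (Icc 0 (log 2)) := fun x hx => (hinv x hx).2
  obtain ⟨ha0, ha_le⟩ := hmaps hH₂
  rcases ha_le.eq_or_lt with hhalf | ha
  · simp only [hhalf, binConv_half_right]
    exact convexOn_const _ (convex_Icc _ _)
  set a := h2inv H₂
  have hderiv : ∀ x ∈ Ioo 0 (log 2), HasDerivAt (fun H₁ => h2 (binConv (h2inv H₁) a))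
      ((1 - 2 * a) * (h2Deriv (binConv (h2inv x) a) / h2Deriv (h2inv x))) x := by
    intro x hx
    obtain ⟨hq0, hq⟩ := binConv_mem_Ioo (h2inv_mem_Ioo hmaps hinvOn hx) ⟨ha0, ha⟩
    refine ((hasDerivAt_h2 hq0.ne' (by linarith)).comp x ((hasDerivAt_binConv_left _ a).comp x
      (hasDerivAt_h2inv hmaps hinvOn hx))).congr_deriv ?_
    ring
  refine MonotoneOn.convexOn_of_deriv (convex_Icc _ _) ?_ ?_ ?_
  · have hconv : Continuous fun p => binConv p a := by unfold binConv; fun_prop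
    exact (continuous_h2.comp hconv).comp_continuousOn (h2inv_continuousOn hmaps hinvOn)
  · rw [interior_Icc]
    exact fun x hx => (hderiv x hx).differentiableAt.differentiableWithinAt
  · rw [interior_Icc]
    intro x hx y hy hxy
    rw [(hderiv x hx).deriv, (hderiv y hy).deriv]
    refine mul_le_mul_of_nonneg_left ?_ (by linarith)
    exact monotoneOn_h2Deriv_binConv_div ⟨ha0, ha⟩ (h2inv_mem_Ioo hmaps hinvOn hx)
      (h2inv_mem_Ioo hmaps hinvOn hy) ((h2inv_strictMonoOn hmaps hinvOn).monotoneOn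
        (Ioo_subset_Icc_self hx) (Ioo_subset_Icc_self hy) hxy)
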